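/- Δ₀ is the union of the good simplices: convexHull(A ∪ C) = ⋃_{S good} convexHull(S). -/

import Mathlib

noncomputable section

/-- The ambient space `ℝ^{2k}`, written as pairs `(x, y)` with `x, y ∈ ℝ^k`. -/
abbrev V (k : ℕ) := (Fin k ⊕ Fin k) → ℝ

/-- `A_j = (e_j, 0)`. -/
def vA (k : ℕ) (j : Fin k) : V k
  | .inl i => if i = j then 1 else 0
  | .inr _ => 0

/-- `B_j = (1/(2n)) · (2·𝟙 − e_j, 2·𝟙 − e_j)` with `n = 2k − 1`. -/
def vB (k : ℕ) (j : Fin k) : V k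
  | .inl i => (2 - if i = j then 1 else 0) / (2 * (2 * (k : ℝ) - 1))
  | .inr i => (2 - if i = j then 1 else 0) / (2 * (2 * (k : ℝ) - 1))

/-- `C_j = (0, e_j)`. -/
def vC (k : ℕ) (j : Fin k) : V k
  | .inl _ => 0
  | .inr i => if i = j then 1 else 0

def setA (k : ℕ) : Set (V k) := Set.range (vA k)
def setB (k : ℕ) : Set (V k) := Set.range (vB k)
def setC (k : ℕ) : Set (V k) := Set.range (vC k)
def setX (k : ℕ) : Set (V k) := setA k ∪ setB k ∪ setC k

/-- A subset `S ⊆ X` is good if it has exactly `2k` elements, contains no full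
triple `{A_j, B_j, C_j}`, and `S ≠ A ∪ C`. -/
def IsGood (k : ℕ) (S : Set (V k)) : Prop :=
  S ⊆ setX k ∧ S.ncard = 2 * k ∧
  (∀ j : Fin k, ¬ (({vA k j, vB k j, vC k j} : Set (V k)) ⊆ S)) ∧
  S ≠ setA k ∪ setC k

def Delta0 (k : ℕ) : Set (V k) := convexHull ℝ (setA k ∪ setC k)
def Delta1 (k : ℕ) : Set (V k) := convexHull ℝ (setA k ∪ setB k)
def Delta2 (k : ℕ) : Set (V k) := convexHull ℝ (setB k ∪ setC k)

/-- The modular block `Ω = closure(Δ₀ \ (Δ₁ ∪ Δ₂))`. -/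
def OmegaB (k : ℕ) : Set (V k) := closure (Delta0 k \ (Delta1 k ∪ Delta2 k))

/-!
`Δ₀` is the standard simplex of `ℝ^{2k}`; it contains the hull of every subset of `X`, since each
`B_j` also has nonnegative coordinates summing to `1`.

Conversely, let `p = (a, c) ∈ Δ₀` and `s_j = min a_j c_j`. By the intermediate value theorem there
is a level `l ≥ min_j s_j` with `2 ∑_j (l - s_j)⁺ = l`. Writing `e_j = (l - s_j)⁺` and `n = 2k - 1`,
this makes `∑_j 2n e_j B_j = (l - e, l - e)`, and `l - e_j ≤ s_j`, so
`p = ∑_j ((a_j - l + e_j) A_j + 2n e_j B_j + (c_j - l + e_j) C_j)`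
with nonnegative weights, which sum to `1` because every vertex has coordinate sum `1`.
For each `j` one of the three weights vanishes: that of `B_j` if `s_j > l`, and otherwise that of
whichever of `A_j`, `C_j` realises `s_j`. Dropping that vertex from every triple leaves `2k`
vertices, no full triple, and some `B_j` (one with `s_j ≤ l`): a good set whose hull contains `p`.
-/

section

open Finset

lemma exists_balanced_level {ι : Type*} [Fintype ι] [Nonempty ι] {s : ι → ℝ}
    (hs : ∀ i, 0 ≤ s i) : ∃ l, (∃ i, s i ≤ l) ∧ 2 * ∑ i, max (l - s i) 0 = l := by
  obtain ⟨i₀, -, hi₀⟩ := univ.exists_min_image s univ_nonempty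
  set M := 2 * ∑ i, s i
  have hsum : 0 ≤ ∑ i, s i := sum_nonneg fun i _ => hs i
  have hM : s i₀ ≤ M := by linarith [single_le_sum (fun i _ => hs i) (mem_univ i₀)]
  have hlo : 2 * ∑ i, max (s i₀ - s i) 0 - s i₀ ≤ 0 := by
    have hzero : ∀ i, max (s i₀ - s i) 0 = 0 :=
      fun i => max_eq_right (sub_nonpos.mpr (hi₀ i (mem_univ i)))
    simp [hzero, hs i₀]
  have hhi : 0 ≤ 2 * ∑ i, max (M - s i) 0 - M := by
    have hcard : (1 : ℝ) ≤ Fintype.card ι := by exact_mod_cast Fintype.card_pos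
    calc (0 : ℝ) ≤ 2 * (Fintype.card ι * M - ∑ i, s i) - M := by nlinarith
      _ = 2 * ∑ i, (M - s i) - M := by simp [sum_sub_distrib]
      _ ≤ 2 * ∑ i, max (M - s i) 0 - M := by gcongr with i; exact le_max_left _ _
  have hcont : Continuous fun l => 2 * ∑ i, max (l - s i) 0 - l := by fun_prop
  obtain ⟨l, hl, hfl⟩ := intermediate_value_Icc hM hcont.continuousOn ⟨hlo, hhi⟩
  exact ⟨l, ⟨i₀, hl.1⟩, by linarith [hfl]⟩

lemma sum_smul_mem_convexHull_image {ι E : Type*} [Fintype ι] [AddCommGroup E] [Module ℝ E]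
    {w : ι → ℝ} {v : ι → E} {I : Set ι} (hw₀ : ∀ i, 0 ≤ w i) (hw₁ : ∑ i, w i = 1)
    (hI : ∀ i ∉ I, w i = 0) : ∑ i, w i • v i ∈ convexHull ℝ (v '' I) := by
  classical
  have hw₁' : ∑ i with i ∈ I, w i = 1 :=
    (sum_filter_of_ne fun i _ hi => by_contra fun h => hi (hI i h)).trans hw₁
  rw [← sum_filter_of_ne (p := (· ∈ I)) fun i _ hi => by_contra fun h => hi (by simp [hI i h]),
    ← centerMass_eq_of_sum_1 _ _ hw₁']
  exact centerMass_mem_convexHull _ (fun i _ => hw₀ i) (by simp [hw₁'])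
    fun i hi => Set.mem_image_of_mem v (mem_filter.mp hi).2

lemma sum_apply_sum_smul_of_sum_eq_one {ι κ : Type*} [Fintype ι] [Fintype κ] (w : ι → ℝ) {v : ι → κ → ℝ}
    (hv : ∀ i, ∑ y, v i y = 1) : ∑ y, (∑ i, w i • v i) y = ∑ i, w i := by
  simp only [Finset.sum_apply]
  rw [sum_comm]
  simp [← mul_sum, hv]

variable {k : ℕ}

def vX (k : ℕ) (x : Fin 3 × Fin k) : V k := ![vA k, vB k, vC k] x.1 x.2

@[simp] lemma vX_zero (j : Fin k) : vX k (0, j) = vA k j := rfl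
@[simp] lemma vX_one (j : Fin k) : vX k (1, j) = vB k j := rfl
@[simp] lemma vX_two (j : Fin k) : vX k (2, j) = vC k j := rfl

lemma vB_denom_pos (hk : 0 < k) : (0 : ℝ) < 2 * (2 * k - 1) := by
  have : (1 : ℝ) ≤ k := by exact_mod_cast hk
  linarith

lemma vB_pos (j : Fin k) (x : Fin k ⊕ Fin k) : 0 < vB k j x := by
  cases x <;> simp only [vB] <;> apply div_pos (by split_ifs <;> norm_num) (vB_denom_pos j.pos)

lemma vB_injective : Function.Injective (vB k) := by
  intro i j h
  by_contra hij
  have hi := congrFun h (.inl i)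
  simp only [vB, if_neg hij, if_true] at hi
  rw [div_left_inj' (vB_denom_pos i.pos).ne'] at hi
  norm_num at hi

lemma vX_injective : Function.Injective (vX k) := by
  rintro ⟨κ, i⟩ ⟨μ, j⟩ h
  have hi := congrFun h (.inl i)
  have hi' := congrFun h (.inr i)
  fin_cases κ <;> fin_cases μ <;> simp [vX, vA, vC] at hi hi' ⊢
  all_goals first
    | assumption
    | exact vB_injective h
    | linarith [vB_pos i (.inl i), vB_pos i (.inr i), vB_pos j (.inl i), vB_pos j (.inr i)]

lemma vX_mem_setX (x : Fin 3 × Fin k) : vX k x ∈ setX k := by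
  obtain ⟨κ, j⟩ := x
  fin_cases κ
  exacts [.inl (.inl ⟨j, rfl⟩), .inl (.inr ⟨j, rfl⟩), .inr ⟨j, rfl⟩]

lemma vA_mem_stdSimplex (j : Fin k) : vA k j ∈ stdSimplex ℝ (Fin k ⊕ Fin k) := by
  refine ⟨fun y => ?_, ?_⟩
  · cases y <;> simp only [vA] <;> positivity
  · simp [Fintype.sum_sum_type, vA]

lemma vC_mem_stdSimplex (j : Fin k) : vC k j ∈ stdSimplex ℝ (Fin k ⊕ Fin k) := by
  refine ⟨fun y => ?_, ?_⟩
  · cases y <;> simp only [vC] <;> positivity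
  · simp [Fintype.sum_sum_type, vC]

lemma vB_mem_stdSimplex (j : Fin k) : vB k j ∈ stdSimplex ℝ (Fin k ⊕ Fin k) := by
  refine ⟨fun y => (vB_pos j y).le, ?_⟩
  simp only [Fintype.sum_sum_type, vB, ← Finset.sum_div, ← add_div,
    div_eq_one_iff_eq (vB_denom_pos j.pos).ne']
  simp only [sum_sub_distrib, sum_const, card_univ, Fintype.card_fin, nsmul_eq_mul, sum_ite_eq',
    mem_univ, if_true]
  ring

lemma setX_subset_stdSimplex : setX k ⊆ stdSimplex ℝ (Fin k ⊕ Fin k) := by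
  rintro _ ((⟨j, rfl⟩ | ⟨j, rfl⟩) | ⟨j, rfl⟩)
  exacts [vA_mem_stdSimplex j, vB_mem_stdSimplex j, vC_mem_stdSimplex j]

lemma delta0_eq_stdSimplex : Delta0 k = stdSimplex ℝ (Fin k ⊕ Fin k) := by
  rw [Delta0, setA, setC, ← Set.Sum.elim_range, ← convexHull_basis_eq_stdSimplex]
  congr 2
  funext i y
  cases i <;> cases y <;> simp [vA, vC, eq_comm]

def omitSet (k : ℕ) (ω : Fin k → Fin 3) : Set (V k) :=
  vX k '' (Set.range fun j => (ω j, j))ᶜ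

lemma vX_mem_omitSet_iff {ω : Fin k → Fin 3} {x : Fin 3 × Fin k} :
    vX k x ∈ omitSet k ω ↔ x.1 ≠ ω x.2 := by
  rw [omitSet, vX_injective.mem_set_image]
  constructor
  · intro hx h
    exact hx ⟨x.2, Prod.ext h.symm rfl⟩
  · rintro hx ⟨j, rfl⟩
    exact hx rfl

lemma ncard_omitSet (ω : Fin k → Fin 3) : (omitSet k ω).ncard = 2 * k := by
  rw [omitSet, Set.ncard_image_of_injective _ vX_injective]
  apply Set.ncard_compl_of_ncard_eq_add
  rw [Set.ncard_range_of_injective fun i j h => (Prod.ext_iff.mp h).2]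
  simp only [Nat.card_eq_fintype_card, Fintype.card_prod, Fintype.card_fin]
  ring

lemma vB_notMem_setA_union_setC (j : Fin k) : vB k j ∉ setA k ∪ setC k := by
  rintro (⟨i, hi⟩ | ⟨i, hi⟩)
  · exact absurd (@vX_injective k (0, i) (1, j) hi) (by simp)
  · exact absurd (@vX_injective k (2, i) (1, j) hi) (by simp)

lemma isGood_omitSet {ω : Fin k → Fin 3} (hω : ∃ j, ω j ≠ 1) : IsGood k (omitSet k ω) := by
  refine ⟨Set.image_subset_iff.mpr fun x _ => vX_mem_setX x, ncard_omitSet ω,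
    fun j hj => ?_, fun h => ?_⟩
  · have hmem : vX k (ω j, j) ∈ ({vA k j, vB k j, vC k j} : Set (V k)) := by
      generalize ω j = κ
      fin_cases κ <;> simp
    exact vX_mem_omitSet_iff.mp (hj hmem) rfl
  · obtain ⟨j, hj⟩ := hω
    have hB : vX k (1, j) ∈ omitSet k ω := vX_mem_omitSet_iff.mpr (Ne.symm hj)
    exact vB_notMem_setA_union_setC j (h ▸ hB)

lemma sum_smul_vA (a : Fin k → ℝ) : ∑ j, a j • vA k j = Sum.elim a 0 := by
  ext (i | i) <;> simp [vA, Finset.sum_apply]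

lemma sum_smul_vC (c : Fin k → ℝ) : ∑ j, c j • vC k j = Sum.elim (0 : Fin k → ℝ) c := by
  ext (i | i) <;> simp [vC, Finset.sum_apply]

lemma sum_smul_vB (hk : 0 < k) {t u : Fin k → ℝ}
    (htu : ∀ i, 2 * ∑ j, t j - t i = 2 * (2 * k - 1) * u i) :
    ∑ j, t j • vB k j = Sum.elim u u := by
  have hu : (fun i => (2 * ∑ j, t j - t i) / (2 * (2 * k - 1))) = u :=
    funext fun i => by rw [htu, mul_div_cancel_left₀ _ (vB_denom_pos hk).ne']
  rw [← hu]
  ext (i | i) <;>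
    simp only [Finset.sum_apply, Pi.smul_apply, smul_eq_mul, vB, Sum.elim_inl, Sum.elim_inr,
      ← mul_div_assoc, ← sum_div, mul_sub, sum_sub_distrib, mul_ite, mul_one, mul_zero,
      sum_ite_eq, mem_univ, if_true, ← sum_mul, mul_comm]

lemma sum_smul_vX (α β γ : Fin k → ℝ) :
    ∑ x, ![α, β, γ] x.1 x.2 • vX k x =
      ∑ j, α j • vA k j + ∑ j, β j • vB k j + ∑ j, γ j • vC k j := by
  simp [Fintype.sum_prod_type, Fin.sum_univ_three]

def pairMin (p : V k) (j : Fin k) : ℝ := min (p (.inl j)) (p (.inr j))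

def levelWeights (p : V k) (l : ℝ) (x : Fin 3 × Fin k) : ℝ :=
  ![fun j => p (.inl j) - (l - max (l - pairMin p j) 0),
    fun j => 2 * (2 * k - 1) * max (l - pairMin p j) 0,
    fun j => p (.inr j) - (l - max (l - pairMin p j) 0)] x.1 x.2

def levelOmit (p : V k) (l : ℝ) (j : Fin k) : Fin 3 :=
  if pairMin p j ≤ l then (if p (.inl j) ≤ p (.inr j) then 0 else 2) else 1

lemma levelWeights_nonneg (p : V k) (l : ℝ) (x : Fin 3 × Fin k) :
    0 ≤ levelWeights p l x := by
  obtain ⟨κ, j⟩ := x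
  have hle : l - max (l - pairMin p j) 0 ≤ pairMin p j := by
    linarith [le_max_left (l - pairMin p j) 0]
  fin_cases κ
  · simp [levelWeights, hle.trans (min_le_left _ _)]
  · exact mul_nonneg (vB_denom_pos j.pos).le (le_max_right _ _)
  · simp [levelWeights, hle.trans (min_le_right _ _)]

lemma levelWeights_levelOmit (p : V k) (l : ℝ) (j : Fin k) :
    levelWeights p l (levelOmit p l j, j) = 0 := by
  unfold levelOmit
  split_ifs with hsl hac
  · show p (.inl j) - (l - max (l - pairMin p j) 0) = 0
    rw [max_eq_left (sub_nonneg.mpr hsl), pairMin, min_eq_left hac]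
    ring
  · show p (.inr j) - (l - max (l - pairMin p j) 0) = 0
    rw [max_eq_left (sub_nonneg.mpr hsl), pairMin, min_eq_right (le_of_not_ge hac)]
    ring
  · show 2 * (2 * k - 1) * max (l - pairMin p j) 0 = 0
    rw [max_eq_right (sub_nonpos.mpr (le_of_not_ge hsl)), mul_zero]

lemma sum_levelWeights_smul (hk : 0 < k) (p : V k) {l : ℝ}
    (hl : 2 * ∑ j, max (l - pairMin p j) 0 = l) :
    ∑ x, levelWeights p l x • vX k x = p := by
  simp only [levelWeights]
  rw [sum_smul_vX, sum_smul_vA, sum_smul_vB hk (u := fun i => l - max (l - pairMin p i) 0)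
    fun i => by rw [← mul_sum]; linear_combination (2 * (2 * k - 1) : ℝ) * hl, sum_smul_vC]
  ext (i | i) <;> simp

lemma exists_omitSet_mem_convexHull {p : V k} (hp : p ∈ stdSimplex ℝ (Fin k ⊕ Fin k)) :
    ∃ ω : Fin k → Fin 3, (∃ j, ω j ≠ 1) ∧ p ∈ convexHull ℝ (omitSet k ω) := by
  have hk : 0 < k := Nat.pos_of_ne_zero fun hk => by subst hk; simpa using hp.2
  have : Nonempty (Fin k) := ⟨⟨0, hk⟩⟩
  obtain ⟨l, ⟨j₀, hj₀⟩, hl⟩ :=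
    exists_balanced_level (s := pairMin p) fun j => le_min (hp.1 _) (hp.1 _)
  refine ⟨levelOmit p l, ⟨j₀, by rw [levelOmit, if_pos hj₀]; split <;> decide⟩, ?_⟩
  have hcomb := sum_levelWeights_smul hk p hl
  have hw₁ : ∑ x, levelWeights p l x = 1 := by
    rw [← sum_apply_sum_smul_of_sum_eq_one _ fun x => (setX_subset_stdSimplex (vX_mem_setX x)).2,
      hcomb, hp.2]
  have hmem := sum_smul_mem_convexHull_image (v := vX k)
    (I := (Set.range fun j => (levelOmit p l j, j))ᶜ) (levelWeights_nonneg p l) hw₁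
    fun _ hx => by
      obtain ⟨j, rfl⟩ := not_not.mp hx
      exact levelWeights_levelOmit p l j
  rwa [hcomb] at hmem

end

theorem stmt_9_general (k : ℕ) :
    Delta0 k = ⋃ S ∈ {S : Set (V k) | IsGood k S}, convexHull ℝ S := by
  rw [delta0_eq_stdSimplex]
  refine subset_antisymm (fun p hp => ?_) (Set.iUnion₂_subset fun S hS => ?_)
  · obtain ⟨ω, hω, hpω⟩ := exists_omitSet_mem_convexHull hp
    exact Set.mem_biUnion (isGood_omitSet hω) hpω
  · exact convexHull_min (hS.1.trans setX_subset_stdSimplex) (convex_stdSimplex ℝ _)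

/-- `Δ₀` is the union of the good simplices. -/
theorem stmt_9 (k : ℕ) (hk : 2 ≤ k) :
    Delta0 k = ⋃ S ∈ {S : Set (V k) | IsGood k S}, convexHull ℝ S :=
  stmt_9_general k
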